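/- Tableau shuffling (jeu de taquin exchange) is an involution: if the pair of skew standard Young tableaux (S, T), where sh(T) extends sh(S), shuffles to (T̃, S̃), then (T̃, S̃) shuffles back to (S, T). -/

import Mathlib

/-- `β` is obtained from `α` by adding a single box. -/
def OneBox (α β : YoungDiagram) : Prop := α ≤ β ∧ β.cells.card = α.cells.card + 1

/-- A chain of partitions of length `m`, each step adding one box
(the chain encoding of a skew standard Young tableau). -/
def IsChain' (m : ℕ) (S : ℕ → YoungDiagram) : Prop := ∀ i, i < m → OneBox (S i) (S (i + 1))

/-- Two cells are adjacent if they share an edge. -/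
def AdjCell (c d : ℕ × ℕ) : Prop :=
  (c.1 = d.1 ∧ (c.2 + 1 = d.2 ∨ d.2 + 1 = c.2)) ∨
  (c.2 = d.2 ∧ (c.1 + 1 = d.1 ∨ d.1 + 1 = c.1))

/-- The local recurrence condition of growth diagrams for a square with corners
`γ ⊆ α, δ ⊆ β`: if the two boxes of `β/γ` are nonadjacent then `α` and `δ` are the
two distinct intermediate partitions between `γ` and `β`. -/
def GrowthSq (γ α δ β : YoungDiagram) : Prop :=
  (∃ c ∈ β.cells, ∃ d ∈ β.cells, c ∉ γ.cells ∧ d ∉ γ.cells ∧ c ≠ d ∧ ¬ AdjCell c d) → α ≠ δ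

/-- A growth diagram on the rectangle `[0,t] × [0,s]`. -/
def IsGrowth (t s : ℕ) (L : ℕ → ℕ → YoungDiagram) : Prop :=
  (∀ i j, i < t → j ≤ s → OneBox (L i j) (L (i + 1) j)) ∧
  (∀ i j, i ≤ t → j < s → OneBox (L i j) (L i (j + 1))) ∧
  (∀ i j, i < t → j < s → GrowthSq (L i j) (L i (j + 1)) (L (i + 1) j) (L (i + 1) (j + 1)))

/-- `(S, T)` shuffles to `(T', S')`: there is a growth diagram on `[0,t] × [0,s]` whose
left edge is the chain `S` (length `s`), top edge is `T` (length `t`), bottom edge is `T'`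
and right edge is `S'`.  This encodes the jeu de taquin shuffle of a pair of skew
standard tableaux. -/
def ShufflesTo (s t : ℕ) (S T T' S' : ℕ → YoungDiagram) : Prop :=
  ∃ L, IsGrowth t s L ∧ (∀ j, j ≤ s → L 0 j = S j) ∧ (∀ i, i ≤ t → L i s = T i) ∧
    (∀ i, i ≤ t → L i 0 = T' i) ∧ (∀ j, j ≤ s → L t j = S' j)

/-! The local rule of a growth diagram is symmetric in the two intermediate partitions of a
square, so the transpose of a growth diagram is again a growth diagram. Transposition swaps
left edge with top edge and bottom edge with right edge, which is exactly the inverse shuffle. -/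

theorem GrowthSq.swap {γ α δ β : YoungDiagram} (h : GrowthSq γ α δ β) : GrowthSq γ δ α β :=
  fun hboxes => (h hboxes).symm

theorem IsGrowth.transpose {t s : ℕ} {L : ℕ → ℕ → YoungDiagram} (h : IsGrowth t s L) :
    IsGrowth s t (fun i j => L j i) := by
  obtain ⟨hRow, hCol, hSq⟩ := h
  exact ⟨fun i j hi hj => hCol j i hj hi, fun i j hi hj => hRow j i hj hi,
    fun i j hi hj => (hSq j i hj hi).swap⟩

theorem ShufflesTo.symm {s t : ℕ} {S T T' S' : ℕ → YoungDiagram}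
    (h : ShufflesTo s t S T T' S') : ShufflesTo t s T' S' S T := by
  obtain ⟨L, hL, hLeft, hTop, hBottom, hRight⟩ := h
  exact ⟨fun i j => L j i, hL.transpose, hBottom, hRight, hLeft, hTop⟩

theorem shuffling_is_involution_general
    (s t : ℕ) (S T T' S' : ℕ → YoungDiagram)
    (h : ShufflesTo s t S T T' S') :
    ShufflesTo t s T' S' S T :=
  h.symm

/-- Tableau shuffling (jeu de taquin exchange) is an involution: if the pair `(S, T)` of
skew standard Young tableaux (encoded as chains of partitions, with `sh(T)` extending
`sh(S)`) shuffles to `(T', S')`, then `(T', S')` shuffles back to `(S, T)`. -/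
theorem shuffling_is_involution
    (s t : ℕ) (S T T' S' : ℕ → YoungDiagram)
    (hS : IsChain' s S) (hT : IsChain' t T)
    (h : ShufflesTo s t S T T' S') :
    ShufflesTo t s T' S' S T :=
  shuffling_is_involution_general s t S T T' S' h
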